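/- Let G be a finite abelian group, B a nonempty subset of G, b ∈ B, and r₀ ∈ ℕ such that |(r₀+1)B| = |r₀B|. Then for every r ≥ r₀ one has rB = r₀B + (r − r₀)b. -/
import Mathlib


open Pointwise

/-- The `r`-fold sumset of a subset `B` of an additive commutative monoid,
with the convention that the `0`-fold sumset is `{0}`. -/
def foldSumG {G : Type*} [AddCommMonoid G] (r : ℕ) (B : Set G) : Set G :=
  {z : G | ∃ f : Fin r → G, (∀ i, f i ∈ B) ∧ ∑ i, f i = z}

lemma foldSumG_succ {G : Type*} [AddCommMonoid G] (r : ℕ) (B : Set G) :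
    foldSumG (r + 1) B = foldSumG r B + B := by
  ext z
  constructor
  · rintro ⟨f, hf, rfl⟩
    rw [Fin.sum_univ_castSucc]
    exact ⟨∑ i : Fin r, f i.castSucc, ⟨fun i => f i.castSucc, fun i => hf _, rfl⟩,
      f (Fin.last r), hf _, rfl⟩
  · rintro ⟨x, ⟨f, hf, rfl⟩, y, hy, rfl⟩
    refine ⟨Fin.snoc f y, ?_, ?_⟩
    · intro i
      refine Fin.lastCases ?_ ?_ i
      · simp [hy]
      · intro j; simp [hf j]
    · rw [Fin.sum_univ_castSucc]
      simp

theorem foldSum_eq_translate_of_card_stable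
    {G : Type*} [AddCommGroup G] [Fintype G] (B : Set G) (hB : B.Nonempty)
    (b : G) (hb : b ∈ B) (r₀ : ℕ)
    (hcard : (foldSumG (r₀ + 1) B).ncard = (foldSumG r₀ B).ncard) :
    ∀ r ≥ r₀, foldSumG r B = foldSumG r₀ B + ({(r - r₀) • b} : Set G) := by
  -- key step: (r₀+1)B = r₀B + {b}
  have hkey : foldSumG (r₀ + 1) B = foldSumG r₀ B + ({b} : Set G) := by
    have hsub : foldSumG r₀ B + ({b} : Set G) ⊆ foldSumG (r₀ + 1) B := by
      rw [foldSumG_succ]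
      exact Set.add_subset_add_left (by simpa using hb)
    have htr : (foldSumG r₀ B + ({b} : Set G)).ncard = (foldSumG r₀ B).ncard := by
      rw [Set.add_singleton]
      exact Set.ncard_image_of_injective _ (add_left_injective b)
    exact (Set.eq_of_subset_of_ncard_le hsub (by rw [htr, hcard]) (Set.toFinite _)).symm
  intro r hr
  obtain ⟨k, rfl⟩ := Nat.exists_eq_add_of_le hr
  induction k with
  | zero => simp [Set.add_singleton]
  | succ k ih =>
    have ih' := ih (Nat.le_add_right _ _)
    have : r₀ + (k + 1) = (r₀ + k) + 1 := by ring
    rw [this, foldSumG_succ, ih']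
    rw [show foldSumG r₀ B + {(r₀ + k - r₀) • b} + B
        = (foldSumG r₀ B + B) + {(r₀ + k - r₀) • b} by
      rw [add_assoc, add_comm ({(r₀ + k - r₀) • b} : Set G) B, add_assoc]]
    rw [← foldSumG_succ, hkey, add_assoc, Set.singleton_add_singleton]
    congr 2
    have h1 : r₀ + k + 1 - r₀ = k + 1 := by omega
    have h2 : r₀ + k - r₀ = k := by omega
    rw [h1, h2, succ_nsmul, add_comm]
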